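/- arXiv:2601.02817 — 3 statements merged into one kernel-verified Lean document; each statement's English description precedes it below -/
import Mathlib

section
/- Let θ ∈ (0, π/2), let S be a bounded linear operator on H such that S² is Berezin sectorial with semi-angle θ relative to K, and let α > 0 be a real number. Then ber(S²) ≥ max{β₁, β₂}, where β₁ = (1/(2α sin θ)) · (‖(S + iαS*)*(S + iαS*)‖_ber − ‖S*S + α²·SS*‖_ber) and β₂ = (1/(2α sin θ)) · (‖S*S + α²·SS*‖_ber − ‖(S − iαS*)*(S − iαS*)‖_ber). -/
open scoped InnerProductSpace
open ContinuousLinearMap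

noncomputable section

variable {H : Type*} [NormedAddCommGroup H] [InnerProductSpace ℂ H] [CompleteSpace H]

/-- The Berezin number of `A` relative to a set `K` of unit vectors:
`ber(A) = sup_{x ∈ K} |⟨A x, x⟩|` (with the paper's inner product `⟨A x, x⟩ = ⟪x, A x⟫_ℂ`). -/
def berNum (K : Set H) (A : H →L[ℂ] H) : ℝ :=
  ⨆ x : K, ‖⟪(x : H), A x⟫_ℂ‖

/-- The Berezin norm of `A` relative to `K`: `‖A‖_ber = sup_{x, y ∈ K} |⟨A x, y⟩|`. -/
def berNorm (K : Set H) (A : H →L[ℂ] H) : ℝ :=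
  ⨆ x : K, ⨆ y : K, ‖⟪(y : H), A (x : H)⟫_ℂ‖

/-- The real part `Re(A) = (A + A*)/2` of an operator. -/
def reOp (A : H →L[ℂ] H) : H →L[ℂ] H := (2 : ℂ)⁻¹ • (A + adjoint A)

/-- The imaginary part `Im(A) = (A - A*)/(2i)` of an operator. -/
def imOp (A : H →L[ℂ] H) : H →L[ℂ] H := (2 * Complex.I)⁻¹ • (A - adjoint A)

/-- `A` is Berezin sectorial with semi-angle `θ` relative to `K`:
every Berezin symbol value `⟨A x, x⟩`, `x ∈ K`, lies in the sector `S_θ`. -/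
def BerSectorial (K : Set H) (θ : ℝ) (A : H →L[ℂ] H) : Prop :=
  ∀ x ∈ K, 0 ≤ (⟪x, A x⟫_ℂ).re ∧ |(⟪x, A x⟫_ℂ).im| ≤ Real.tan θ * (⟪x, A x⟫_ℂ).re

/-- `A ∈ Π_θ^{Ber,P}`: Berezin sectorial and both `Re(A)` and `Im(A)` satisfy
the Berezin number power inequality. -/
def BerSectorialP (K : Set H) (θ : ℝ) (A : H →L[ℂ] H) : Prop :=
  BerSectorial K θ A ∧
    ∀ n : ℕ, 0 < n →
      berNum K (reOp A ^ n) ≤ berNum K (reOp A) ^ n ∧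
      berNum K (imOp A ^ n) ≤ berNum K (imOp A) ^ n

lemma inner_abs_le (K : Set H) (hKunit : ∀ x ∈ K, ‖x‖ = 1) (A : H →L[ℂ] H)
    {x y : H} (hx : x ∈ K) (hy : y ∈ K) : ‖⟪y, A x⟫_ℂ‖ ≤ ‖A‖ := by
  calc ‖⟪y, A x⟫_ℂ‖ ≤ ‖y‖ * ‖A x‖ := norm_inner_le_norm _ _
    _ ≤ ‖y‖ * (‖A‖ * ‖x‖) := by
        exact mul_le_mul_of_nonneg_left (A.le_opNorm x) (norm_nonneg y)
    _ = ‖A‖ := by rw [hKunit x hx, hKunit y hy]; ring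

lemma le_berNum (K : Set H) (hKunit : ∀ x ∈ K, ‖x‖ = 1) (A : H →L[ℂ] H)
    {x : H} (hx : x ∈ K) : ‖⟪x, A x⟫_ℂ‖ ≤ berNum K A := by
  apply le_ciSup (f := fun x : K => ‖⟪(x : H), A x⟫_ℂ‖) ?_ ⟨x, hx⟩
  refine ⟨‖A‖, ?_⟩
  rintro _ ⟨z, rfl⟩
  exact inner_abs_le K hKunit A z.2 z.2

lemma le_berNorm (K : Set H) (hKunit : ∀ x ∈ K, ‖x‖ = 1) (A : H →L[ℂ] H)
    {x y : H} (hx : x ∈ K) (hy : y ∈ K) : ‖⟪y, A x⟫_ℂ‖ ≤ berNorm K A := by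
  have h1 : ‖⟪y, A x⟫_ℂ‖ ≤ ⨆ y : K, ‖⟪(y : H), A x⟫_ℂ‖ := by
    apply le_ciSup (f := fun y : K => ‖⟪(y : H), A x⟫_ℂ‖) ?_ ⟨y, hy⟩
    exact ⟨‖A‖, by rintro _ ⟨z, rfl⟩; exact inner_abs_le K hKunit A hx z.2⟩
  refine h1.trans ?_
  apply le_ciSup (f := fun x : K => ⨆ y : K, ‖⟪(y : H), A (x : H)⟫_ℂ‖) ?_ ⟨x, hx⟩
  refine ⟨‖A‖, ?_⟩
  rintro _ ⟨z, rfl⟩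
  exact Real.iSup_le (fun w => inner_abs_le K hKunit A z.2 w.2) (norm_nonneg A)

lemma berNorm_le (K : Set H) (A : H →L[ℂ] H) {M : ℝ} (hM : 0 ≤ M)
    (h : ∀ x ∈ K, ∀ y ∈ K, ‖⟪y, A x⟫_ℂ‖ ≤ M) : berNorm K A ≤ M :=
  Real.iSup_le (fun x => Real.iSup_le (fun y => h x x.2 y y.2) hM) hM

lemma berNorm_nonneg (K : Set H) (hK : K.Nonempty) (hKunit : ∀ x ∈ K, ‖x‖ = 1)
    (A : H →L[ℂ] H) : 0 ≤ berNorm K A := by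
  obtain ⟨x, hx⟩ := hK
  exact (norm_nonneg _).trans (le_berNorm K hKunit A hx hx)

lemma berNum_nonneg (K : Set H) (hK : K.Nonempty) (hKunit : ∀ x ∈ K, ‖x‖ = 1)
    (A : H →L[ℂ] H) : 0 ≤ berNum K A := by
  obtain ⟨x, hx⟩ := hK
  exact (norm_nonneg _).trans (le_berNum K hKunit A hx)

lemma expand_norm_sq (S : H →L[ℂ] H) (α : ℝ) (z : H) :
    ‖S z + (Complex.I * α) • adjoint S z‖^2
      = ‖S z‖^2 + α^2 * ‖adjoint S z‖^2 + 2*α*(⟪z, S (S z)⟫_ℂ).im := by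
  rw [norm_add_sq (𝕜 := ℂ), inner_smul_right, adjoint_inner_right, norm_smul]
  have h0 : ⟪S (S z), z⟫_ℂ = (starRingEnd ℂ) ⟪z, S (S z)⟫_ℂ := (inner_conj_symm _ _).symm
  rw [h0]
  set w := ⟪z, S (S z)⟫_ℂ
  have h1 : (RCLike.re (Complex.I * ↑α * (starRingEnd ℂ) w) : ℝ) = α * w.im := by
    simp [Complex.mul_re, Complex.mul_im]
  rw [h1]
  have h2 : ‖Complex.I * (α:ℂ)‖ = |α| := by
    simp
  rw [h2, mul_pow, sq_abs]
  ring

lemma expand_norm_sq_sub (S : H →L[ℂ] H) (α : ℝ) (z : H) :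
    ‖S z - (Complex.I * α) • adjoint S z‖^2
      = ‖S z‖^2 + α^2 * ‖adjoint S z‖^2 - 2*α*(⟪z, S (S z)⟫_ℂ).im := by
  have h := expand_norm_sq S (-α) z
  have e : S z + (Complex.I * ((-α : ℝ) : ℂ)) • adjoint S z
      = S z - (Complex.I * α) • adjoint S z := by
    push_cast
    rw [mul_neg, neg_smul, ← sub_eq_add_neg]
  rw [e] at h
  rw [h]; ring

lemma inner_sq_op (S : H →L[ℂ] H) (x y : H) :
    ⟪y, (adjoint S * S) x⟫_ℂ = ⟪S y, S x⟫_ℂ := by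
  rw [ContinuousLinearMap.mul_apply, adjoint_inner_right]


set_option maxHeartbeats 1000000 in
/-- If `S²` is Berezin sectorial with semi-angle `θ ∈ (0, π/2)` relative to
`K` and `α > 0`, then `ber(S²) ≥ max{β₁, β₂}` with
`β₁ = (1/(2α sin θ)) (‖|S + iαS*|²‖_ber − ‖S*S + α² SS*‖_ber)` and
`β₂ = (1/(2α sin θ)) (‖S*S + α² SS*‖_ber − ‖|S − iαS*|²‖_ber)`. -/
theorem berezin_sectorial_square_lower_bound
    (K : Set H) (hK : K.Nonempty) (hKunit : ∀ x ∈ K, ‖x‖ = 1)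
    (θ : ℝ) (hθ : θ ∈ Set.Ioo 0 (Real.pi / 2))
    (S : H →L[ℂ] H) (α : ℝ) (hα : 0 < α)
    (hS2 : BerSectorial K θ (S * S)) :
    max ((2 * α * Real.sin θ)⁻¹ *
          (berNorm K (adjoint (S + (Complex.I * α) • adjoint S) *
              (S + (Complex.I * α) • adjoint S))
            - berNorm K (adjoint S * S + ((α : ℂ) ^ 2) • (S * adjoint S))))
        ((2 * α * Real.sin θ)⁻¹ *
          (berNorm K (adjoint S * S + ((α : ℂ) ^ 2) • (S * adjoint S))
            - berNorm K (adjoint (S - (Complex.I * α) • adjoint S) *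
                (S - (Complex.I * α) • adjoint S))))
      ≤ berNum K (S * S) := by
  obtain ⟨hθ0, hθ2⟩ := hθ
  have hs : 0 < Real.sin θ :=
    Real.sin_pos_of_pos_of_lt_pi hθ0 (by linarith [Real.pi_pos])
  have hcos : 0 < Real.cos θ := Real.cos_pos_of_mem_Ioo ⟨by linarith [Real.pi_pos], hθ2⟩
  set s := Real.sin θ with hsdef
  set A₁ := S + (Complex.I * α) • adjoint S with hA₁def
  set A₂ := S - (Complex.I * α) • adjoint S with hA₂def
  set N := berNum K (S * S) with hNdef
  set BQ := berNorm K (adjoint S * S + ((α : ℂ) ^ 2) • (S * adjoint S)) with hBQdef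
  set B₁ := berNorm K (adjoint A₁ * A₁) with hB₁def
  set B₂ := berNorm K (adjoint A₂ * A₂) with hB₂def
  have hN0 : 0 ≤ N := berNum_nonneg K hK hKunit _
  have hBQ0 : 0 ≤ BQ := berNorm_nonneg K hK hKunit _
  have hB₂0 : 0 ≤ B₂ := berNorm_nonneg K hK hKunit _
  have hc : 0 < 2 * α * s := by positivity
  -- the sectorial bound on the imaginary part
  have hIm : ∀ z ∈ K, |(⟪z, S (S z)⟫_ℂ).im| ≤ s * N := by
    intro z hz
    have hmulz : (S * S) z = S (S z) := rfl
    obtain ⟨h1, h2⟩ := hS2 z hz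
    rw [hmulz] at h1 h2
    set w := ⟪z, S (S z)⟫_ℂ with hw
    have habs : ‖w‖ ≤ N := by
      have := le_berNum K hKunit (S * S) hz
      rwa [hmulz] at this
    have h3 : |w.im| * Real.cos θ ≤ s * w.re := by
      rw [Real.tan_eq_sin_div_cos, div_mul_eq_mul_div] at h2
      exact (le_div_iff₀ hcos).mp h2
    have hsq : (‖w‖)^2 = w.re^2 + w.im^2 := by
      rw [Complex.sq_norm, Complex.normSq_apply]; ring
    have h5 : w.im^2 * (Real.cos θ)^2 ≤ s^2 * w.re^2 := by
      have h4 := mul_le_mul h3 h3 (mul_nonneg (abs_nonneg _) hcos.le) (mul_nonneg hs.le h1)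
      nlinarith [sq_abs w.im]
    have h6 : w.im^2 ≤ (s * ‖w‖)^2 := by
      nlinarith [Real.sin_sq_add_cos_sq θ, sq_nonneg w.im]
    have h7 : |w.im| ≤ s * ‖w‖ := by
      calc |w.im| = Real.sqrt (w.im^2) := (Real.sqrt_sq_eq_abs _).symm
        _ ≤ Real.sqrt ((s * ‖w‖)^2) := Real.sqrt_le_sqrt h6
        _ = s * ‖w‖ := Real.sqrt_sq (mul_nonneg hs.le (norm_nonneg _))
    calc |w.im| ≤ s * ‖w‖ := h7
      _ ≤ s * N := mul_le_mul_of_nonneg_left habs hs.le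
  -- values of Q
  have fQ : ∀ x y : H, ⟪y, (adjoint S * S + ((α : ℂ) ^ 2) • (S * adjoint S)) x⟫_ℂ
      = ⟪S y, S x⟫_ℂ + (α : ℂ)^2 * ⟪adjoint S y, adjoint S x⟫_ℂ := by
    intro x y
    rw [ContinuousLinearMap.add_apply, ContinuousLinearMap.smul_apply, inner_add_right,
      inner_smul_right, ContinuousLinearMap.mul_apply, ContinuousLinearMap.mul_apply,
      adjoint_inner_right, adjoint_inner_left]
  have qdiag : ∀ z : H, (⟪z, (adjoint S * S + ((α : ℂ) ^ 2) • (S * adjoint S)) z⟫_ℂ).re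
      = ‖S z‖^2 + α^2 * ‖adjoint S z‖^2 := by
    intro z
    rw [fQ z z, inner_self_eq_norm_sq_to_K, inner_self_eq_norm_sq_to_K]
    simp [pow_two, Complex.ofReal_mul]
  -- P diagonal values
  have p1diag : ∀ z : H, (⟪z, (adjoint A₁ * A₁) z⟫_ℂ).re = ‖A₁ z‖^2 := by
    intro z
    rw [inner_sq_op, inner_self_eq_norm_sq_to_K]
    norm_cast
  have p2diag : ∀ z : H, (⟪z, (adjoint A₂ * A₂) z⟫_ℂ).re = ‖A₂ z‖^2 := by
    intro z
    rw [inner_sq_op, inner_self_eq_norm_sq_to_K]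
    norm_cast
  have hA₁app : ∀ z : H, A₁ z = S z + (Complex.I * α) • adjoint S z := fun z => by
    rw [hA₁def]; simp
  have hA₂app : ∀ z : H, A₂ z = S z - (Complex.I * α) • adjoint S z := fun z => by
    rw [hA₂def]; simp
  -- pointwise bound for A₁
  have hA1 : ∀ z ∈ K, ‖A₁ z‖^2 ≤ BQ + 2 * α * s * N := by
    intro z hz
    rw [hA₁app, expand_norm_sq]
    have hq : ‖S z‖^2 + α^2 * ‖adjoint S z‖^2 ≤ BQ := by
      rw [← qdiag z]
      exact (Complex.re_le_norm _).trans (le_berNorm K hKunit _ hz hz)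
    have him := hIm z hz
    have : 2 * α * (⟪z, S (S z)⟫_ℂ).im ≤ 2 * α * (s * N) := by
      have := (abs_le.mp him).2
      nlinarith
    linarith
  -- pointwise bound for Q diagonal
  have hQd : ∀ z ∈ K, ‖S z‖^2 + α^2 * ‖adjoint S z‖^2 ≤ B₂ + 2 * α * s * N := by
    intro z hz
    have h2 : ‖A₂ z‖^2 ≤ B₂ := by
      rw [← p2diag z]
      exact (Complex.re_le_norm _).trans (le_berNorm K hKunit _ hz hz)
    have hexp : ‖A₂ z‖^2 = ‖S z‖^2 + α^2 * ‖adjoint S z‖^2 - 2*α*(⟪z, S (S z)⟫_ℂ).im := by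
      rw [hA₂app, expand_norm_sq_sub]
    have him := hIm z hz
    have : 2 * α * (⟪z, S (S z)⟫_ℂ).im ≤ 2 * α * (s * N) := by
      have := (abs_le.mp him).2
      nlinarith
    linarith
  -- main inequality 1
  have ineq1 : B₁ ≤ BQ + 2 * α * s * N := by
    apply berNorm_le K _ (by positivity)
    intro x hx y hy
    have e : ⟪y, (adjoint A₁ * A₁) x⟫_ℂ = ⟪A₁ y, A₁ x⟫_ℂ := inner_sq_op A₁ x y
    rw [e]
    calc ‖⟪A₁ y, A₁ x⟫_ℂ‖ ≤ ‖A₁ y‖ * ‖A₁ x‖ := norm_inner_le_norm _ _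
      _ ≤ BQ + 2 * α * s * N := by
          nlinarith [hA1 x hx, hA1 y hy, norm_nonneg (A₁ x), norm_nonneg (A₁ y),
            sq_nonneg (‖A₁ y‖ - ‖A₁ x‖)]
  -- main inequality 2
  have ineq2 : BQ ≤ B₂ + 2 * α * s * N := by
    apply berNorm_le K _ (by positivity)
    intro x hx y hy
    rw [fQ x y]
    calc ‖⟪S y, S x⟫_ℂ + (α : ℂ)^2 * ⟪adjoint S y, adjoint S x⟫_ℂ‖
        ≤ ‖⟪S y, S x⟫_ℂ‖ + ‖(α : ℂ)^2 * ⟪adjoint S y, adjoint S x⟫_ℂ‖ := norm_add_le _ _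
      _ = ‖⟪S y, S x⟫_ℂ‖ + α^2 * ‖⟪adjoint S y, adjoint S x⟫_ℂ‖ := by
          rw [norm_mul]
          norm_num [norm_pow, Complex.norm_real, sq_abs]
      _ ≤ ‖S y‖ * ‖S x‖ + α^2 * (‖adjoint S y‖ * ‖adjoint S x‖) := by
          have h1 := norm_inner_le_norm (𝕜 := ℂ) (S y) (S x)
          have h2 := norm_inner_le_norm (𝕜 := ℂ) (adjoint S y) (adjoint S x)
          nlinarith [sq_nonneg α]
      _ ≤ B₂ + 2 * α * s * N := by
          nlinarith [hQd x hx, hQd y hy, norm_nonneg (S x), norm_nonneg (S y),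
            norm_nonneg (adjoint S x), norm_nonneg (adjoint S y),
            sq_nonneg (‖S y‖ - ‖S x‖), sq_nonneg (α * ‖adjoint S y‖ - α * ‖adjoint S x‖)]
  apply max_le
  · rw [inv_mul_le_iff₀ hc]
    linarith
  · rw [inv_mul_le_iff₀ hc]
    linarith
end
end

section
/- Let θ ∈ (0, π/2), let S be a bounded linear operator on H that is Berezin sectorial with semi-angle θ relative to K, and let α > 0 be a real number. Then ber(S) ≥ max{β₁, β₂}, where β₁ = (1/(2α sin θ)) · (‖(S + iαI)*(S + iαI)‖_ber − ‖S*S + α²·I‖_ber) and β₂ = (1/(2α sin θ)) · (‖S*S + α²·I‖_ber − ‖(S − iαI)*(S − iαI)‖_ber), I being the identity operator on H. -/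
open scoped InnerProductSpace
open ContinuousLinearMap

noncomputable section

variable {H : Type*} [NormedAddCommGroup H] [InnerProductSpace ℂ H] [CompleteSpace H]

/-- Basic bound: for unit vectors the pairing is bounded by the operator norm. -/
lemma berAux_abs_le (A : H →L[ℂ] H) {x y : H} (hx : ‖x‖ = 1) (hy : ‖y‖ = 1) :
    ‖⟪y, A x⟫_ℂ‖ ≤ ‖A‖ := by
  calc ‖⟪y, A x⟫_ℂ‖ ≤ ‖y‖ * ‖A x‖ := norm_inner_le_norm _ _
    _ ≤ ‖y‖ * (‖A‖ * ‖x‖) := by gcongr; exact A.le_opNorm x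
    _ = ‖A‖ := by rw [hx, hy]; ring

/-- Diagonal values are dominated by the Berezin norm. -/
lemma berAux_diag_le_berNorm (K : Set H) (hK : K.Nonempty) (hKunit : ∀ x ∈ K, ‖x‖ = 1)
    (A : H →L[ℂ] H) {x : H} (hx : x ∈ K) :
    ‖⟪x, A x⟫_ℂ‖ ≤ berNorm K A := by
  haveI : Nonempty K := hK.to_subtype
  have hbdd : ∀ x' : K, BddAbove (Set.range fun y : K => ‖⟪(y : H), A (x' : H)⟫_ℂ‖) :=
    fun x' => ⟨‖A‖, by
      rintro _ ⟨y, rfl⟩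
      exact berAux_abs_le A (hKunit _ x'.2) (hKunit _ y.2)⟩
  have h1 : ‖⟪x, A x⟫_ℂ‖ ≤ ⨆ y : K, ‖⟪(y : H), A x⟫_ℂ‖ :=
    le_ciSup (hbdd ⟨x, hx⟩) (⟨x, hx⟩ : K)
  refine h1.trans ?_
  refine le_ciSup (f := fun x' : K => ⨆ y : K, ‖⟪(y : H), A (x' : H)⟫_ℂ‖) ?_ ⟨x, hx⟩
  refine ⟨‖A‖, ?_⟩
  rintro _ ⟨x', rfl⟩
  exact ciSup_le fun y => berAux_abs_le A (hKunit _ x'.2) (hKunit _ y.2)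

lemma berAux_berNorm_le (K : Set H) (hK : K.Nonempty) (A : H →L[ℂ] H) {B : ℝ}
    (h : ∀ x ∈ K, ∀ y ∈ K, ‖⟪y, A x⟫_ℂ‖ ≤ B) : berNorm K A ≤ B := by
  haveI : Nonempty K := hK.to_subtype
  exact ciSup_le fun x => ciSup_le fun y => h x x.2 y y.2

lemma berAux_abs_le_berNum (K : Set H) (hKunit : ∀ x ∈ K, ‖x‖ = 1) (S : H →L[ℂ] H)
    {x : H} (hx : x ∈ K) : ‖⟪x, S x⟫_ℂ‖ ≤ berNum K S :=
  le_ciSup (f := fun z : K => ‖⟪(z : H), S z⟫_ℂ‖)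
    ⟨‖S‖, by rintro _ ⟨z, rfl⟩; exact berAux_abs_le S (hKunit _ z.2) (hKunit _ z.2)⟩
    (⟨x, hx⟩ : K)

set_option maxHeartbeats 1000000 in
theorem berezin_sectorial_self_lower_bound
    (K : Set H) (hK : K.Nonempty) (hKunit : ∀ x ∈ K, ‖x‖ = 1)
    (θ : ℝ) (hθ : θ ∈ Set.Ioo 0 (Real.pi / 2))
    (S : H →L[ℂ] H) (α : ℝ) (hα : 0 < α)
    (hS : BerSectorial K θ S) :
    max ((2 * α * Real.sin θ)⁻¹ *
          (berNorm K (adjoint (S + (Complex.I * α) • (1 : H →L[ℂ] H)) *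
              (S + (Complex.I * α) • (1 : H →L[ℂ] H)))
            - berNorm K (adjoint S * S + ((α : ℂ) ^ 2) • (1 : H →L[ℂ] H))))
        ((2 * α * Real.sin θ)⁻¹ *
          (berNorm K (adjoint S * S + ((α : ℂ) ^ 2) • (1 : H →L[ℂ] H))
            - berNorm K (adjoint (S - (Complex.I * α) • (1 : H →L[ℂ] H)) *
                (S - (Complex.I * α) • (1 : H →L[ℂ] H)))))
      ≤ berNum K S := by
  obtain ⟨hθ0, hθ2⟩ := hθ
  have hsin : 0 < Real.sin θ := Real.sin_pos_of_pos_of_lt_pi hθ0 (by linarith [Real.pi_pos])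
  have hcos : 0 < Real.cos θ := Real.cos_pos_of_mem_Ioo ⟨by linarith [Real.pi_pos], hθ2⟩
  set β := berNum K S with hβ
  set c := 2 * α * Real.sin θ with hc
  have hcpos : 0 < c := by positivity
  set Tp := S + (Complex.I * α) • (1 : H →L[ℂ] H) with hTp
  set Tm := S - (Complex.I * α) • (1 : H →L[ℂ] H) with hTm
  set M := berNorm K (adjoint S * S + ((α : ℂ) ^ 2) • (1 : H →L[ℂ] H)) with hM
  set N1 := berNorm K (adjoint Tp * Tp) with hN1
  set N2 := berNorm K (adjoint Tm * Tm) with hN2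
  -- Key: |Im ⟪z, S z⟫| ≤ sin θ * β for z ∈ K
  have hIm : ∀ z ∈ K, |(⟪z, S z⟫_ℂ).im| ≤ Real.sin θ * β := by
    intro z hz
    obtain ⟨hre, him⟩ := hS z hz
    set w := ⟪z, S z⟫_ℂ with hw
    have habs : ‖w‖ ≤ β := berAux_abs_le_berNum K hKunit S hz
    have hsq : (‖w‖)^2 = w.re^2 + w.im^2 := by
      rw [Complex.sq_norm, Complex.normSq_apply]; ring
    have hcosmul : Real.cos θ * |w.im| ≤ Real.sin θ * w.re := by
      rw [Real.tan_eq_sin_div_cos] at him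
      calc Real.cos θ * |w.im| ≤ Real.cos θ * (Real.sin θ / Real.cos θ * w.re) :=
            mul_le_mul_of_nonneg_left him hcos.le
        _ = Real.sin θ * w.re := by field_simp
    have h2 : |w.im|^2 ≤ (Real.sin θ * ‖w‖)^2 := by
      have hpyth := Real.sin_sq_add_cos_sq θ
      nlinarith [abs_nonneg w.im, sq_abs w.im, mul_self_nonneg (Real.sin θ * w.re),
        mul_le_mul hcosmul hcosmul (by positivity) (by positivity)]
    have h3 : |w.im| ≤ Real.sin θ * ‖w‖ := by
      have := Real.sqrt_le_sqrt h2
      rwa [Real.sqrt_sq (abs_nonneg _), Real.sqrt_sq (mul_nonneg hsin.le (norm_nonneg _))] at this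
    exact h3.trans (mul_le_mul_of_nonneg_left habs hsin.le)
  -- diagonal value of M
  have hMdiag : ∀ z ∈ K, ‖S z‖^2 + α^2 ≤ M := by
    intro z hz
    have hz1 : ‖z‖ = 1 := hKunit z hz
    have hval : ⟪z, (adjoint S * S + ((α : ℂ) ^ 2) • (1 : H →L[ℂ] H)) z⟫_ℂ
        = ((‖S z‖^2 + α^2 : ℝ) : ℂ) := by
      simp [ContinuousLinearMap.add_apply, ContinuousLinearMap.mul_apply,
        ContinuousLinearMap.smul_apply, ContinuousLinearMap.one_apply,
        inner_add_right, inner_smul_right, adjoint_inner_right,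
        inner_self_eq_norm_sq_to_K, hz1]
    have := berAux_diag_le_berNorm K hK hKunit (adjoint S * S + ((α : ℂ) ^ 2) • (1 : H →L[ℂ] H)) hz
    rw [hval, Complex.norm_real, Real.norm_eq_abs, abs_of_nonneg (by positivity)] at this
    exact this
  -- norm of Tp z
  have hTpsq : ∀ z ∈ K, ‖Tp z‖^2 = ‖S z‖^2 + α^2 + 2 * α * (⟪z, S z⟫_ℂ).im := by
    intro z hz
    have hz1 : ‖z‖ = 1 := hKunit z hz
    have happ : Tp z = S z + (Complex.I * α) • z := by
      simp [hTp, ContinuousLinearMap.add_apply, ContinuousLinearMap.smul_apply,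
        ContinuousLinearMap.one_apply]
    rw [happ]
    have hexp := norm_add_sq (𝕜 := ℂ) (S z) ((Complex.I * α) • z)
    have hre : (⟪S z, (Complex.I * (α:ℂ)) • z⟫_ℂ).re = α * (⟪z, S z⟫_ℂ).im := by
      rw [inner_smul_right]
      simp only [Complex.mul_re, Complex.mul_im, Complex.I_re, Complex.I_im,
        Complex.ofReal_re, Complex.ofReal_im]
      rw [show (⟪S z, z⟫_ℂ).im = -(⟪z, S z⟫_ℂ).im from by
        rw [← inner_conj_symm (S z) z, Complex.conj_im]]
      ring
    have hnsm : ‖(Complex.I * (α:ℂ)) • z‖^2 = α^2 := by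
      rw [norm_smul]; simp [mul_pow, hz1]
    simp only [RCLike.re_to_complex] at hexp
    rw [hexp, hre, hnsm]; ring
  have hTmsq : ∀ z ∈ K, ‖Tm z‖^2 = ‖S z‖^2 + α^2 - 2 * α * (⟪z, S z⟫_ℂ).im := by
    intro z hz
    have hz1 : ‖z‖ = 1 := hKunit z hz
    have happ : Tm z = S z - (Complex.I * α) • z := by
      simp [hTm, ContinuousLinearMap.sub_apply, ContinuousLinearMap.smul_apply,
        ContinuousLinearMap.one_apply]
    rw [happ]
    have hexp := norm_sub_sq (𝕜 := ℂ) (S z) ((Complex.I * α) • z)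
    have hre : (⟪S z, (Complex.I * (α:ℂ)) • z⟫_ℂ).re = α * (⟪z, S z⟫_ℂ).im := by
      rw [inner_smul_right]
      simp only [Complex.mul_re, Complex.mul_im, Complex.I_re, Complex.I_im,
        Complex.ofReal_re, Complex.ofReal_im]
      rw [show (⟪S z, z⟫_ℂ).im = -(⟪z, S z⟫_ℂ).im from by
        rw [← inner_conj_symm (S z) z, Complex.conj_im]]
      ring
    have hnsm : ‖(Complex.I * (α:ℂ)) • z‖^2 = α^2 := by
      rw [norm_smul]; simp [mul_pow, hz1]
    simp only [RCLike.re_to_complex] at hexp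
    rw [hexp, hre, hnsm]; ring
  -- diagonal value of N2
  have hN2diag : ∀ z ∈ K, ‖Tm z‖^2 ≤ N2 := by
    intro z hz
    have hval : ⟪z, (adjoint Tm * Tm) z⟫_ℂ = ⟪Tm z, Tm z⟫_ℂ := by
      rw [ContinuousLinearMap.mul_apply, adjoint_inner_right]
    have hberle := berAux_diag_le_berNorm K hK hKunit (adjoint Tm * Tm) hz
    rw [hval] at hberle
    have hre2 : ‖Tm z‖^2 = (⟪Tm z, Tm z⟫_ℂ).re := by
      have := inner_self_eq_norm_sq (𝕜 := ℂ) (Tm z)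
      simpa using this.symm
    rw [hre2]
    exact (Complex.re_le_norm _).trans hberle
  -- bounds on each T z
  have hβ0 : 0 ≤ β := le_trans (norm_nonneg _) (berAux_abs_le_berNum K hKunit S hK.choose_spec)
  have hTpbound : ∀ z ∈ K, ‖Tp z‖^2 ≤ M + c * β := by
    intro z hz
    have h1 := hTpsq z hz
    have h2 := hMdiag z hz
    have h3 := (abs_le.mp (hIm z hz)).2
    rw [h1]
    rw [hc]
    nlinarith
  have hMbound : ∀ z ∈ K, ‖S z‖^2 + α^2 ≤ N2 + c * β := by
    intro z hz
    have h1 := hTmsq z hz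
    have h2 := hN2diag z hz
    have h3 := (abs_le.mp (hIm z hz)).2
    rw [hc]
    nlinarith
  -- N1 ≤ M + c β
  have hkey1 : N1 ≤ M + c * β := by
    refine berAux_berNorm_le K hK _ ?_
    intro x hx y hy
    have hval : ⟪(y : H), (adjoint Tp * Tp) x⟫_ℂ = ⟪Tp y, Tp x⟫_ℂ := by
      rw [ContinuousLinearMap.mul_apply, adjoint_inner_right]
    rw [hval]
    have hcs : ‖⟪Tp y, Tp x⟫_ℂ‖ ≤ ‖Tp y‖ * ‖Tp x‖ := norm_inner_le_norm _ _
    refine hcs.trans ?_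
    have hbx := hTpbound x hx
    have hby := hTpbound y hy
    nlinarith [norm_nonneg (Tp x), norm_nonneg (Tp y), sq_nonneg (‖Tp x‖ - ‖Tp y‖)]
  -- M ≤ N2 + c β
  have hkey2 : M ≤ N2 + c * β := by
    refine berAux_berNorm_le K hK _ ?_
    intro x hx y hy
    have hval : ⟪(y : H), (adjoint S * S + ((α : ℂ) ^ 2) • (1 : H →L[ℂ] H)) x⟫_ℂ
        = ⟪S y, S x⟫_ℂ + ((α : ℂ)^2) * ⟪(y : H), x⟫_ℂ := by
      simp [ContinuousLinearMap.add_apply, ContinuousLinearMap.mul_apply,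
        ContinuousLinearMap.smul_apply, ContinuousLinearMap.one_apply,
        inner_add_right, inner_smul_right, adjoint_inner_right]
    rw [hval]
    have habs : ‖⟪S y, S x⟫_ℂ + ((α : ℂ)^2) * ⟪(y : H), x⟫_ℂ‖
        ≤ ‖S y‖ * ‖S x‖ + α^2 := by
      refine (norm_add_le _ _).trans ?_
      have h1 : ‖⟪S y, S x⟫_ℂ‖ ≤ ‖S y‖ * ‖S x‖ := by
        exact norm_inner_le_norm _ _
      have h2 : ‖((α : ℂ)^2) * ⟪(y : H), x⟫_ℂ‖ ≤ α^2 := by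
        rw [norm_mul]
        have : ‖⟪(y : H), x⟫_ℂ‖ ≤ 1 := by
          calc ‖⟪(y : H), x⟫_ℂ‖ ≤ ‖y‖ * ‖x‖ := norm_inner_le_norm _ _
            _ = 1 := by rw [hKunit x hx, hKunit y hy]; ring
        calc ‖(α : ℂ)^2‖ * ‖⟪(y : H), x⟫_ℂ‖
            ≤ ‖(α : ℂ)^2‖ * 1 :=
              mul_le_mul_of_nonneg_left this (norm_nonneg _)
          _ = α^2 := by
              rw [mul_one, ← Complex.ofReal_pow, Complex.norm_real, Real.norm_eq_abs,
                abs_of_nonneg (by positivity)]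
      linarith
    refine habs.trans ?_
    have hbx := hMbound x hx
    have hby := hMbound y hy
    nlinarith [norm_nonneg (S x), norm_nonneg (S y), sq_nonneg (‖S x‖ - ‖S y‖)]
  apply max_le
  · rw [inv_mul_le_iff₀ hcpos]
    linarith
  · rw [inv_mul_le_iff₀ hcpos]
    linarith
end
end

section
/- Let θ ∈ (0, π/2) and let T ∈ Π_θ^{Ber,P} relative to K. Then (ber(T))² ≥ (1/(4 sin²θ)) · ‖T*T + TT*‖_ber + (1/(2 sin²θ)) · ( (ber(Im(T)))² − (ber(Re(T)))² ). -/
open scoped InnerProductSpace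
open ContinuousLinearMap

noncomputable section

variable {H : Type*} [NormedAddCommGroup H] [InnerProductSpace ℂ H] [CompleteSpace H]

/-- The Berezin-symbol family of `A` is bounded above (over unit vectors). -/
lemma berNum_bddAbove (K : Set H) (hKunit : ∀ x ∈ K, ‖x‖ = 1) (A : H →L[ℂ] H) :
    BddAbove (Set.range fun x : K => ‖⟪(x : H), A x⟫_ℂ‖) := by
  refine ⟨‖A‖, ?_⟩
  rintro r ⟨x, rfl⟩
  calc ‖⟪(x : H), A x⟫_ℂ‖ = ‖(⟪(x : H), A x⟫_ℂ : ℂ)‖ := rfl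
    _ ≤ ‖(x : H)‖ * ‖A (x : H)‖ := norm_inner_le_norm _ _
    _ ≤ ‖(x : H)‖ * (‖A‖ * ‖(x : H)‖) := by gcongr; exact A.le_opNorm _
    _ = ‖A‖ := by rw [hKunit x x.2]; ring

lemma reOp_selfAdjoint (A : H →L[ℂ] H) : adjoint (reOp A) = reOp A := by
  rw [← star_eq_adjoint]
  unfold reOp
  rw [star_smul, star_add, star_eq_adjoint, star_eq_adjoint, adjoint_adjoint]
  rw [show star ((2:ℂ)⁻¹) = (2:ℂ)⁻¹ by simp, add_comm]

lemma imOp_selfAdjoint (A : H →L[ℂ] H) : adjoint (imOp A) = imOp A := by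
  rw [← star_eq_adjoint]
  unfold imOp
  rw [star_smul, star_sub, star_eq_adjoint, star_eq_adjoint, adjoint_adjoint]
  rw [show star ((2 * Complex.I)⁻¹) = -(2 * Complex.I)⁻¹ by
    simp [Complex.star_def, map_inv₀, mul_neg, inv_neg, Complex.conj_I]]
  rw [show adjoint A - A = -(A - adjoint A) by abel]
  rw [neg_smul_neg]

set_option maxHeartbeats 1600000 in
/-- If `T ∈ Π_θ^{Ber,P}` with `θ ∈ (0, π/2)`, then
`ber(T)² ≥ (1/(4 sin²θ)) ‖T*T + TT*‖_ber + (1/(2 sin²θ)) (ber(Im T)² − ber(Re T)²)`. -/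
theorem berezin_sectorialP_square_lower_bound
    (K : Set H) (hK : K.Nonempty) (hKunit : ∀ x ∈ K, ‖x‖ = 1)
    (θ : ℝ) (hθ : θ ∈ Set.Ioo 0 (Real.pi / 2))
    (T : H →L[ℂ] H) (hT : BerSectorialP K θ T) :
    (4 * Real.sin θ ^ 2)⁻¹ * berNorm K (adjoint T * T + T * adjoint T)
        + (2 * Real.sin θ ^ 2)⁻¹ * ((berNum K (imOp T)) ^ 2 - (berNum K (reOp T)) ^ 2)
      ≤ (berNum K T) ^ 2 := by
  have hNe : Nonempty K := hK.to_subtype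
  have hs : 0 < Real.sin θ := Real.sin_pos_of_pos_of_lt_pi hθ.1
    (lt_trans hθ.2 (by linarith [Real.pi_pos]))
  have hc : 0 < Real.cos θ := Real.cos_pos_of_mem_Ioo
    ⟨by linarith [hθ.1, Real.pi_pos], hθ.2⟩
  set s := Real.sin θ with hs_def
  set a := berNum K (reOp T) with ha_def
  set b := berNum K (imOp T) with hb_def
  set β := berNum K T with hβ_def
  -- the squared norm of Re T z, Im T z at points of K is controlled by a², b²
  have hkeyR : ∀ z : K, ‖reOp T (z : H)‖ ^ 2 ≤ a ^ 2 := by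
    intro z
    have h2 : ⟪(z : H), (reOp T ^ 2) z⟫_ℂ = (‖reOp T (z : H)‖ : ℂ) ^ 2 := by
      rw [pow_two, ContinuousLinearMap.mul_apply, ← adjoint_inner_left (reOp T)]
      rw [reOp_selfAdjoint, inner_self_eq_norm_sq_to_K]
      norm_cast
    have h1 : ‖⟪(z : H), (reOp T ^ 2) z⟫_ℂ‖ ≤ berNum K (reOp T ^ 2) :=
      le_ciSup (berNum_bddAbove K hKunit _) z
    rw [h2] at h1
    have h3 : ‖((‖reOp T (z : H)‖ : ℂ) ^ 2)‖ = ‖reOp T (z : H)‖ ^ 2 := by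
      rw [norm_pow, Complex.norm_real, Real.norm_eq_abs, abs_of_nonneg (norm_nonneg _)]
    rw [h3] at h1
    exact h1.trans (hT.2 2 (by norm_num)).1
  have hkeyI : ∀ z : K, ‖imOp T (z : H)‖ ^ 2 ≤ b ^ 2 := by
    intro z
    have h2 : ⟪(z : H), (imOp T ^ 2) z⟫_ℂ = (‖imOp T (z : H)‖ : ℂ) ^ 2 := by
      rw [pow_two, ContinuousLinearMap.mul_apply, ← adjoint_inner_left (imOp T)]
      rw [imOp_selfAdjoint, inner_self_eq_norm_sq_to_K]
      norm_cast
    have h1 : ‖⟪(z : H), (imOp T ^ 2) z⟫_ℂ‖ ≤ berNum K (imOp T ^ 2) :=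
      le_ciSup (berNum_bddAbove K hKunit _) z
    rw [h2] at h1
    have h3 : ‖((‖imOp T (z : H)‖ : ℂ) ^ 2)‖ = ‖imOp T (z : H)‖ ^ 2 := by
      rw [norm_pow, Complex.norm_real, Real.norm_eq_abs, abs_of_nonneg (norm_nonneg _)]
    rw [h3] at h1
    exact h1.trans (hT.2 2 (by norm_num)).2
  -- parallelogram identity: ‖Tz‖² + ‖T*z‖² = 2(‖Re T z‖² + ‖Im T z‖²)
  have hpar : ∀ z : H, ‖T z‖ ^ 2 + ‖adjoint T z‖ ^ 2
      = 2 * (‖reOp T z‖ ^ 2 + ‖imOp T z‖ ^ 2) := by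
    intro z
    have h1 : reOp T z = (2 : ℂ)⁻¹ • (T z + adjoint T z) := by
      simp [reOp]
    have h2 : imOp T z = (2 * Complex.I)⁻¹ • (T z - adjoint T z) := by
      simp [imOp]
    have hn1 : ‖((2 : ℂ))⁻¹‖ = 1 / 2 := by
      rw [norm_inv]; norm_num
    have hn2 : ‖((2 : ℂ) * Complex.I)⁻¹‖ = 1 / 2 := by
      rw [norm_inv, norm_mul, Complex.norm_I]; norm_num
    rw [h1, h2, norm_smul, norm_smul, hn1, hn2]
    have hp := parallelogram_law_with_norm ℂ (T z) (adjoint T z)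
    nlinarith [hp]
  -- bound on the Berezin norm of T*T + TT*
  have hN : berNorm K (adjoint T * T + T * adjoint T) ≤ 2 * (a ^ 2 + b ^ 2) := by
    apply ciSup_le; intro x; apply ciSup_le; intro y
    have e1 : ⟪(y : H), adjoint T (T (x : H))⟫_ℂ = ⟪T (y : H), T (x : H)⟫_ℂ :=
      adjoint_inner_right T _ _
    have e2 : ⟪(y : H), T (adjoint T (x : H))⟫_ℂ
        = ⟪adjoint T (y : H), adjoint T (x : H)⟫_ℂ :=
      (adjoint_inner_left T _ _).symm
    have hval : ⟪(y : H), (adjoint T * T + T * adjoint T) (x : H)⟫_ℂ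
        = ⟪T (y : H), T (x : H)⟫_ℂ + ⟪adjoint T (y : H), adjoint T (x : H)⟫_ℂ := by
      rw [add_apply, inner_add_right, ContinuousLinearMap.mul_apply, ContinuousLinearMap.mul_apply, e1, e2]
    calc ‖⟪(y : H), (adjoint T * T + T * adjoint T) (x : H)⟫_ℂ‖
        ≤ ‖T (y : H)‖ * ‖T (x : H)‖ + ‖adjoint T (y : H)‖ * ‖adjoint T (x : H)‖ := by
          rw [hval]
          refine (norm_add_le _ _).trans ?_
          gcongr <;> · exact norm_inner_le_norm _ _
      _ ≤ 2 * (a ^ 2 + b ^ 2) := by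
          nlinarith [sq_nonneg (‖T (y : H)‖ - ‖T (x : H)‖),
            sq_nonneg (‖adjoint T (y : H)‖ - ‖adjoint T (x : H)‖),
            hpar (x : H), hpar (y : H), hkeyR x, hkeyR y, hkeyI x, hkeyI y]
  -- bound b ≤ s * β from sectoriality
  have hb : b ≤ s * β := by
    apply ciSup_le; intro x
    set z : ℂ := ⟪(x : H), T x⟫_ℂ with hz_def
    have him : ⟪(x : H), imOp T (x : H)⟫_ℂ = ((z.im : ℝ) : ℂ) := by
      have hc1 : ⟪(x : H), adjoint T (x : H)⟫_ℂ = (starRingEnd ℂ) z := by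
        rw [adjoint_inner_right, hz_def, ← inner_conj_symm]
      have : ⟪(x : H), imOp T (x : H)⟫_ℂ
          = (2 * Complex.I)⁻¹ * (z - (starRingEnd ℂ) z) := by
        simp only [imOp, smul_apply, sub_apply, inner_smul_right, inner_sub_right]
        rw [hc1, hz_def]
      rw [this, Complex.sub_conj]
      field_simp
      push_cast; ring
    rw [him, Complex.norm_real, Real.norm_eq_abs]
    have hsec := hT.1 x x.2
    have hre : 0 ≤ z.re := hsec.1
    have htan : |z.im| ≤ Real.tan θ * z.re := hsec.2
    have hct : Real.cos θ * |z.im| ≤ s * z.re := by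
      rw [Real.tan_eq_sin_div_cos] at htan
      have := mul_le_mul_of_nonneg_left htan hc.le
      calc Real.cos θ * |z.im| ≤ Real.cos θ * (s / Real.cos θ * z.re) := this
        _ = s * z.re := by field_simp
    have hsq : z.im ^ 2 ≤ s ^ 2 * ‖z‖ ^ 2 := by
      have h2 : (Real.cos θ * |z.im|) ^ 2 ≤ (s * z.re) ^ 2 := by
        have h0 : 0 ≤ Real.cos θ * |z.im| := mul_nonneg hc.le (abs_nonneg _)
        exact pow_le_pow_left₀ h0 hct 2
      have habs : ‖z‖ ^ 2 = z.re ^ 2 + z.im ^ 2 := by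
        rw [Complex.sq_norm, Complex.normSq_apply]; ring
      nlinarith [Real.sin_sq_add_cos_sq θ, sq_abs z.im, h2, habs, sq_nonneg z.im]
    have habsle : |z.im| ≤ s * ‖z‖ := by
      have h0 : 0 ≤ s * ‖z‖ := mul_nonneg hs.le (norm_nonneg z)
      have : |z.im| ^ 2 ≤ (s * ‖z‖) ^ 2 := by
        rw [sq_abs]; nlinarith [hsq]
      exact (pow_le_pow_iff_left₀ (abs_nonneg _) h0 two_ne_zero).mp this
    refine habsle.trans ?_
    gcongr
    exact le_ciSup (berNum_bddAbove K hKunit T) x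
  have hb0 : 0 ≤ b := by
    obtain ⟨x⟩ := hNe
    exact le_trans (norm_nonneg _) (le_ciSup (berNum_bddAbove K hKunit _) x)
  have hbb : b ^ 2 ≤ s ^ 2 * β ^ 2 := by nlinarith [hb, hb0, hs]
  have hs2 : (0:ℝ) < s ^ 2 := by positivity
  calc (4 * s ^ 2)⁻¹ * berNorm K (adjoint T * T + T * adjoint T)
        + (2 * s ^ 2)⁻¹ * (b ^ 2 - a ^ 2)
      ≤ (4 * s ^ 2)⁻¹ * (2 * (a ^ 2 + b ^ 2)) + (2 * s ^ 2)⁻¹ * (b ^ 2 - a ^ 2) := by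
        gcongr
    _ = b ^ 2 / s ^ 2 := by field_simp; ring
    _ ≤ β ^ 2 := by rw [div_le_iff₀ hs2]; nlinarith [hbb]
end
end
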